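/- arXiv:1605.01750 — 4 statements merged into one kernel-verified Lean document; each statement's English description precedes it below -/
import Mathlib

section
/- For every integer m ≥ 5, the polynomial f(x) = (m-4)x⁴ - (m-1)x³ - x + 1 has exactly one real root in the open interval (0,1). -/
/-!
Substituting `t = x⁻¹` turns the quartic into
`x⁴ * ((t - 1) * (t³ - (m - 1)) - 3)`, so the roots in `(0, 1)` are the `t > 1` with
`(t - 1) * (t³ - (m - 1)) = 3`. Both factors are then positive, and a product of positive
increasing functions is strictly increasing, so there is at most one such `t`; the
intermediate value theorem on `[0, 1]` gives one, since `f 0 = 1` and `f 1 = -3`.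
-/

open Set

lemma quartic_eq_pow_four_mul (m x : ℝ) (hx : x ≠ 0) :
    (m - 4) * x ^ 4 - (m - 1) * x ^ 3 - x + 1
      = x ^ 4 * ((x⁻¹ - 1) * (x⁻¹ ^ 3 - (m - 1)) - 3) := by
  field_simp
  ring

lemma strictMonoOn_sub_one_mul_pow_three_sub (c : ℝ) :
    StrictMonoOn (fun t : ℝ => (t - 1) * (t ^ 3 - c)) {t | 1 ≤ t ∧ c ≤ t ^ 3} := by
  rintro s ⟨hs1, hsc⟩ t - hst
  have hs0 : (0 : ℝ) ≤ s := zero_le_one.trans hs1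
  exact mul_lt_mul'' (by linarith) (by linarith [pow_lt_pow_left₀ hst hs0 three_ne_zero])
    (sub_nonneg.2 hs1) (sub_nonneg.2 hsc)

lemma one_le_and_le_pow_three_of_sub_one_mul_pow_three_sub_pos {c t : ℝ} (ht : 1 < t)
    (hpos : 0 < (t - 1) * (t ^ 3 - c)) : 1 ≤ t ∧ c ≤ t ^ 3 :=
  ⟨ht.le, sub_nonneg.1 ((pos_iff_pos_of_mul_pos hpos).1 (sub_pos.2 ht)).le⟩

theorem stmt1_general (m : ℤ)
    (f : ℝ → ℝ) (hf : ∀ x, f x = ((m : ℝ) - 4) * x ^ 4 - ((m : ℝ) - 1) * x ^ 3 - x + 1) :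
    ∃! x : ℝ, x ∈ Set.Ioo (0 : ℝ) 1 ∧ f x = 0 := by
  set g : ℝ → ℝ := fun t => (t - 1) * (t ^ 3 - ((m : ℝ) - 1))
  have hroot : ∀ x ∈ Ioo (0 : ℝ) 1, f x = 0 → 1 < x⁻¹ ∧ g x⁻¹ = 3 := by
    rintro x ⟨hx0, hx1⟩ hfx
    rw [hf, quartic_eq_pow_four_mul _ _ hx0.ne', mul_eq_zero, sub_eq_zero] at hfx
    exact ⟨one_lt_inv₀ hx0 |>.2 hx1, hfx.resolve_left (pow_ne_zero 4 hx0.ne')⟩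
  have hmem : ∀ x ∈ Ioo (0 : ℝ) 1, f x = 0 → x⁻¹ ∈ {t | 1 ≤ t ∧ (m - 1 : ℝ) ≤ t ^ 3} := by
    intro x hx hfx
    obtain ⟨hgt, hg⟩ := hroot x hx hfx
    exact one_le_and_le_pow_three_of_sub_one_mul_pow_three_sub_pos hgt
      (hg.symm ▸ three_pos : 0 < g x⁻¹)
  have hcont : Continuous f := by
    simp only [funext hf]
    fun_prop
  obtain ⟨x, hx, hfx⟩ : ∃ x ∈ Ioo (0 : ℝ) 1, f x = 0 :=
    intermediate_value_Ioo' zero_le_one hcont.continuousOn (by simp [hf])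
  refine ⟨x, ⟨hx, hfx⟩, fun y ⟨hy, hfy⟩ => inv_injective ?_⟩
  exact (strictMonoOn_sub_one_mul_pow_three_sub _).injOn (hmem y hy hfy) (hmem x hx hfx)
    ((hroot y hy hfy).2.trans (hroot x hx hfx).2.symm)

theorem stmt1 (m : ℤ) (hm : 5 ≤ m)
    (f : ℝ → ℝ) (hf : ∀ x, f x = ((m : ℝ) - 4) * x ^ 4 - ((m : ℝ) - 1) * x ^ 3 - x + 1) :
    ∃! x : ℝ, x ∈ Set.Ioo (0 : ℝ) 1 ∧ f x = 0 :=
  stmt1_general m f hf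
end

section
/- For m ≥ 5, the polynomial f(x) = (m-4)x⁴ - (m-1)x³ - x + 1 cannot have four positive real roots. Consequently f has at most two real roots. -/
/-- Key lemma: for m ≥ 5, f cannot have three distinct positive real roots. -/
lemma no_three_roots (M : ℝ) (hM : (5:ℝ) ≤ M) (a b c : ℝ)
    (ha : 0 < a) (hb : 0 < b) (hc : 0 < c)
    (hab : a ≠ b) (hac : a ≠ c) (hbc : b ≠ c)
    (hfa : (M - 4) * a ^ 4 - (M - 1) * a ^ 3 - a + 1 = 0)
    (hfb : (M - 4) * b ^ 4 - (M - 1) * b ^ 3 - b + 1 = 0)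
    (hfc : (M - 4) * c ^ 4 - (M - 1) * c ^ 3 - c + 1 = 0) : False := by
  set s : ℝ := (M - 1) - (M - 4) * (a + b + c) with hs
  have hab' : a - b ≠ 0 := sub_ne_zero.mpr hab
  have hac' : a - c ≠ 0 := sub_ne_zero.mpr hac
  have hbc' : b - c ≠ 0 := sub_ne_zero.mpr hbc
  have h1 : (a - b) * (a - c) * (b - c) * (a * b * c * s - 1) = 0 := by
    linear_combination (-(b * c * (b - c))) * hfa + (a * c * (a - c)) * hfb +
      (-(a * b * (a - b))) * hfc
  have h2 : (a - b) * (a - c) * (b - c) *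
      ((M - 4) * (a * b + a * c + b * c) + s * (a + b + c)) = 0 := by
    linear_combination (-(b - c)) * hfa + (a - c) * hfb + (-(a - b)) * hfc
  have key1 : a * b * c * s = 1 := by
    have := mul_eq_zero.mp h1
    rcases this with h | h
    · exfalso
      rcases mul_eq_zero.mp h with h | h
      · rcases mul_eq_zero.mp h with h | h
        · exact hab' h
        · exact hac' h
      · exact hbc' h
    · linarith [sub_eq_zero.mp h]
  have key2 : (M - 4) * (a * b + a * c + b * c) + s * (a + b + c) = 0 := by
    rcases mul_eq_zero.mp h2 with h | h
    · exfalso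
      rcases mul_eq_zero.mp h with h | h
      · rcases mul_eq_zero.mp h with h | h
        · exact hab' h
        · exact hac' h
      · exact hbc' h
    · exact h
  -- From key1, s > 0
  have habc : 0 < a * b * c := by positivity
  have hs_pos : 0 < s := by
    nlinarith [key1]
  -- From key2, s*(a+b+c) < 0
  have hM4 : (0:ℝ) < M - 4 := by linarith
  have he2 : 0 < a * b + a * c + b * c := by positivity
  have he1 : 0 < a + b + c := by positivity
  nlinarith [mul_pos hM4 he2, mul_pos hs_pos he1]

theorem stmt3 (m : ℤ) (hm : 5 ≤ m)
    (f : ℝ → ℝ) (hf : ∀ x, f x = ((m : ℝ) - 4) * x ^ 4 - ((m : ℝ) - 1) * x ^ 3 - x + 1) :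
    (¬ ∃ x₁ x₂ x₃ x₄ : ℝ, 0 < x₁ ∧ 0 < x₂ ∧ 0 < x₃ ∧ 0 < x₄ ∧
      x₁ ≠ x₂ ∧ x₁ ≠ x₃ ∧ x₁ ≠ x₄ ∧ x₂ ≠ x₃ ∧ x₂ ≠ x₄ ∧ x₃ ≠ x₄ ∧
      f x₁ = 0 ∧ f x₂ = 0 ∧ f x₃ = 0 ∧ f x₄ = 0) ∧
    {x : ℝ | f x = 0}.encard ≤ 2 := by
  have hM : (5:ℝ) ≤ (m:ℝ) := by exact_mod_cast hm
  -- any root is positive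
  have hpos : ∀ x : ℝ, f x = 0 → 0 < x := by
    intro x hx
    rw [hf] at hx
    by_contra h
    push_neg at h
    have h4 : 0 ≤ ((m:ℝ) - 4) * x ^ 4 := by
      apply mul_nonneg (by linarith) (by positivity)
    have h3 : 0 ≤ -(((m:ℝ) - 1) * x ^ 3) := by
      have : x ^ 3 ≤ 0 := Odd.pow_nonpos (by decide) h
      nlinarith
    nlinarith
  have key : ∀ a b c : ℝ, f a = 0 → f b = 0 → f c = 0 →
      a ≠ b → a ≠ c → b ≠ c → False := by
    intro a b c ha hb hc hab hac hbc
    have ha' := ha; have hb' := hb; have hc' := hc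
    rw [hf] at ha' hb' hc'
    exact no_three_roots (m:ℝ) hM a b c (hpos a ha) (hpos b hb) (hpos c hc)
      hab hac hbc ha' hb' hc'
  constructor
  · rintro ⟨x₁, x₂, x₃, x₄, _, _, _, _, h12, h13, _, h23, _, _, h1, h2, h3, _⟩
    exact key x₁ x₂ x₃ h1 h2 h3 h12 h13 h23
  · by_contra h
    push_neg at h
    have h3 : (3:ℕ∞) ≤ {x : ℝ | f x = 0}.encard := by
      exact Order.add_one_le_of_lt h
    obtain ⟨t, hts, ht⟩ := Set.exists_subset_encard_eq h3
    obtain ⟨a, b, c, hab, hac, hbc, rfl⟩ := Set.encard_eq_three.mp ht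
    exact key a b c (hts (by simp)) (hts (by simp)) (hts (by simp)) hab hac hbc
end

section
/- Viewing the unique root y(m) ∈ (0,1) of (m-4)y⁴ - (m-1)y³ - y + 1 = 0 as a differentiable function of the real parameter m ≥ 5, its derivative satisfies y'(m) = - y⁴(y-1)² / (3[y⁴ + (y-1)²]), which is strictly negative; hence y(m) is strictly decreasing in m. -/
open Set

def rootPoly (m Y : ℝ) : ℝ := (m - 4) * Y ^ 4 - (m - 1) * Y ^ 3 - Y + 1

lemma hasDerivAt_rootPoly_comp {y : ℝ → ℝ} {y' m : ℝ} (hy : HasDerivAt y y' m) :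
    HasDerivAt (fun t => rootPoly t (y t))
      (y m ^ 4 - y m ^ 3 + (4 * (m - 4) * y m ^ 3 - 3 * (m - 1) * y m ^ 2 - 1) * y') m := by
  have h4 : HasDerivAt (fun t => y t ^ 4) (4 * y m ^ 3 * y') m := by simpa using hy.fun_pow 4
  have h3 : HasDerivAt (fun t => y t ^ 3) (3 * y m ^ 2 * y') m := by simpa using hy.fun_pow 3
  have h := ((((hasDerivAt_id' m).sub_const 4).fun_mul h4).fun_sub
    (((hasDerivAt_id' m).sub_const 1).fun_mul h3)).fun_sub hy |>.add_const 1
  exact h.congr_deriv (by ring)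

lemma HasDerivAt.eq_zero_of_eqOn_zero {f : ℝ → ℝ} {f' x : ℝ} {s : Set ℝ}
    (hf : HasDerivAt f f' x) (hs : UniqueDiffWithinAt ℝ s x) (hx : x ∈ s) (h0 : EqOn f 0 s) :
    f' = 0 :=
  hs.eq_deriv s hf.hasDerivWithinAt ((hasDerivWithinAt_const x s 0).congr h0 (h0 hx))

/-- `m` is eliminated through the identity
`(4(m-4)Y³ - 3(m-1)Y² - 1) · Y(Y-1) = 3(Y⁴ + (Y-1)²) + (4Y-3) · rootPoly m Y`. -/
lemma implicit_deriv_eq {m Y Y' : ℝ} (hE : rootPoly m Y = 0)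
    (hD : Y ^ 4 - Y ^ 3 + (4 * (m - 4) * Y ^ 3 - 3 * (m - 1) * Y ^ 2 - 1) * Y' = 0) :
    Y' = -(Y ^ 4 * (Y - 1) ^ 2) / (3 * (Y ^ 4 + (Y - 1) ^ 2)) := by
  have hpos : 0 < Y ^ 4 + (Y - 1) ^ 2 := by
    rcases eq_or_ne Y 0 with rfl | hY
    · norm_num
    · positivity
  rw [eq_div_iff (by positivity)]
  unfold rootPoly at hE
  linear_combination Y * (Y - 1) * hD - (4 * Y - 3) * Y' * hE

lemma implicit_deriv_neg {Y : ℝ} (hY0 : Y ≠ 0) (hY1 : Y ≠ 1) :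
    -(Y ^ 4 * (Y - 1) ^ 2) / (3 * (Y ^ 4 + (Y - 1) ^ 2)) < 0 := by
  have hY1' : Y - 1 ≠ 0 := sub_ne_zero.mpr hY1
  exact div_neg_of_neg_of_pos (neg_neg_of_pos (by positivity)) (by positivity)

theorem stmt5 (y : ℝ → ℝ)
    (hroot : ∀ m : ℝ, 5 ≤ m → y m ∈ Set.Ioo (0 : ℝ) 1 ∧
      (m - 4) * (y m) ^ 4 - (m - 1) * (y m) ^ 3 - y m + 1 = 0)
    (hdiff : ∀ m : ℝ, 5 ≤ m → DifferentiableAt ℝ y m) :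
    (∀ m : ℝ, 5 ≤ m →
      deriv y m = -((y m) ^ 4 * (y m - 1) ^ 2) / (3 * ((y m) ^ 4 + (y m - 1) ^ 2)) ∧
      deriv y m < 0) ∧
    StrictAntiOn y (Set.Ici (5 : ℝ)) := by
  have hderiv : ∀ m : ℝ, 5 ≤ m →
      deriv y m = -((y m) ^ 4 * (y m - 1) ^ 2) / (3 * ((y m) ^ 4 + (y m - 1) ^ 2)) ∧
      deriv y m < 0 := by
    intro m hm
    obtain ⟨⟨hy0, hy1⟩, hE⟩ := hroot m hm
    have hD := (hasDerivAt_rootPoly_comp (hdiff m hm).hasDerivAt).eq_zero_of_eqOn_zero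
      (uniqueDiffOn_Ici 5 m hm) hm fun t ht => (hroot t ht).2
    have hformula := implicit_deriv_eq hE hD
    exact ⟨hformula, hformula ▸ implicit_deriv_neg hy0.ne' hy1.ne⟩
  refine ⟨hderiv, strictAntiOn_of_deriv_neg (convex_Ici 5)
    (fun t ht => (hdiff t ht).continuousAt.continuousWithinAt) fun t ht => ?_⟩
  rw [interior_Ici] at ht
  exact (hderiv t ht.le).2
end

section
/- Let α > 0 and β = α^{1/3}, and suppose β⁴ - 4β³ - β + 1 = 0 with 1/2 < β < 1 (the case m = 5). Then (1 - 2α/(1-β))·(1 - α - β) = α + α(β² - 4β + 2)/(4 - β), and this quantity is strictly greater than α. -/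
theorem stmt7 (α β : ℝ) (hβ : β ∈ Set.Ioo (1/2 : ℝ) 1)
    (heq : β ^ 4 - 4 * β ^ 3 - β + 1 = 0) (hα : α = β ^ 3) :
    (1 - 2 * α / (1 - β)) * (1 - α - β) = α + α * (β ^ 2 - 4 * β + 2) / (4 - β) ∧
    (1 - 2 * α / (1 - β)) * (1 - α - β) > α := by
  obtain ⟨h1, h2⟩ := hβ
  have hne1 : (1 : ℝ) - β ≠ 0 := by linarith
  have hne4 : (4 : ℝ) - β ≠ 0 := by linarith
  have key : (1 - 2 * α / (1 - β)) * (1 - α - β) = α + α * (β ^ 2 - 4 * β + 2) / (4 - β) := by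
    subst hα
    field_simp
    nlinarith [heq, sq_nonneg β, mul_self_nonneg (β^2)]
  refine ⟨key, ?_⟩
  rw [key]
  have hpos : α * (β ^ 2 - 4 * β + 2) / (4 - β) > 0 := by
    apply div_pos
    · apply mul_pos
      · rw [hα]; positivity
      · nlinarith
    · linarith
  linarith
end
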